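/- arXiv:2604.13475 — 8 statements merged into one kernel-verified Lean document; each statement's English description precedes it below -/
import Mathlib

section
/- If T ⊆ X^m is an intersecting family of words of length m over an alphabet X of size q ≥ 2 (i.e., any two words in T agree in at least one coordinate), then |T| ≤ q^(m-1). -/
theorem stmt_0 (X : Type) [Fintype X] [DecidableEq X] (q m : ℕ)
    (hcard : Fintype.card X = q) (hq : 2 ≤ q) (hm : 1 ≤ m)
    (T : Finset (Fin m → X))
    (hT : ∀ x ∈ T, ∀ y ∈ T, ∃ j : Fin m, x j = y j) :
    T.card ≤ q ^ (m - 1) := by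
  have hq0 : NeZero q := ⟨by omega⟩
  have e : X ≃ ZMod q := by
    apply Fintype.equivOfCardEq
    rw [hcard, ZMod.card]
  set z : Fin m := ⟨0, hm⟩ with hz
  set F : (Fin m → X) → (Fin (m - 1) → ZMod q) :=
    fun x j => e (x ⟨j.val + 1, by omega⟩) - e (x z) with hF
  have hinj : Set.InjOn F T := by
    intro x hx y hy hxy
    set c : ZMod q := e (y z) - e (x z) with hc
    have hall : ∀ j : Fin m, e (y j) = e (x j) + c := by
      intro j
      rcases Nat.eq_zero_or_pos j.val with h0 | hpos
      · have : j = z := by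
          apply Fin.ext; simp [hz, h0]
        rw [this, hc]; ring
      · have hj : j.val - 1 < m - 1 := by omega
        have := congrFun hxy ⟨j.val - 1, hj⟩
        simp only [hF] at this
        have hjj : (⟨j.val - 1 + 1, by omega⟩ : Fin m) = j := by
          apply Fin.ext; simp; omega
        rw [hjj] at this
        rw [hc]
        linear_combination -this
    obtain ⟨j, hj⟩ := hT x hx y hy
    have hc0 : c = 0 := by
      have := hall j
      rw [hj] at this
      exact (left_eq_add.mp this)
    funext j
    have := hall j
    rw [hc0, add_zero] at this
    exact e.injective this.symm
  calc T.card ≤ Fintype.card (Fin (m - 1) → ZMod q) := by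
        have := Finset.card_le_card_of_injOn F (fun a _ => Finset.mem_univ (F a)) hinj
        simpa using this
    _ = q ^ (m - 1) := by simp [ZMod.card]
end

section
/- Let X be an alphabet of size q ≥ 3 and m ≥ 1. Every intersecting family T ⊆ X^m of maximum size q^(m-1) is a star, i.e., there exist a coordinate j and a letter a ∈ X such that T = {x ∈ X^m : x_j = a}. -/
lemma count_star {X : Type} [Fintype X] [DecidableEq X] (q m : ℕ)
    (hcard : Fintype.card X = q) (j : Fin m) (a : X) :
    (Finset.univ.filter (fun x : Fin m → X => x j = a)).card = q ^ (m - 1) := by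
  classical
  have e : {x : Fin m → X // x j = a} ≃ ({i : Fin m // i ≠ j} → X) :=
    { toFun := fun x i => x.1 i.1
      invFun := fun g => ⟨fun i => if h : i = j then a else g ⟨i, h⟩, by simp⟩
      left_inv := by
        rintro ⟨x, hx⟩
        ext i
        by_cases h : i = j
        · subst h; simpa using hx.symm
        · simp [h]
      right_inv := by
        intro g; ext i; simp [i.2] }
  have h1 : (Finset.univ.filter (fun x : Fin m → X => x j = a)).card
      = Fintype.card {x : Fin m → X // x j = a} := (Fintype.card_subtype _).symm
  rw [h1, Fintype.card_congr e, Fintype.card_fun, hcard]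
  congr 1
  have h2 : Fintype.card {i : Fin m // i ≠ j} = m - 1 := by
    rw [Fintype.card_subtype_compl, Fintype.card_subtype_eq, Fintype.card_fin]
  rw [h2]

lemma exists_inj_avoid {X : Type} [Fintype X] [DecidableEq X] (forb : X → X)
    (h : ∃ c c', forb c ≠ forb c') :
    ∃ g : X → X, Function.Injective g ∧ ∀ c, g c ≠ forb c := by
  classical
  have hcond : ∀ s : Finset X, s.card ≤ (s.biUnion (fun c => ({forb c} : Finset X)ᶜ)).card := by
    intro s
    by_cases hs : ∃ c ∈ s, ∃ c' ∈ s, forb c ≠ forb c'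
    · obtain ⟨c, hc, c', hc', hne⟩ := hs
      have huniv : s.biUnion (fun c => ({forb c} : Finset X)ᶜ) = Finset.univ := by
        apply Finset.eq_univ_of_forall
        intro x
        rcases ne_or_eq x (forb c) with h1 | h1
        · exact Finset.mem_biUnion.2 ⟨c, hc, by simpa using h1⟩
        · exact Finset.mem_biUnion.2 ⟨c', hc', by simp [h1]; exact hne⟩
      rw [huniv]; exact Finset.card_le_univ s
    · push_neg at hs
      rcases Finset.eq_empty_or_nonempty s with rfl | ⟨c0, hc0⟩
      · simp
      · have hsub : ({forb c0} : Finset X)ᶜ ⊆ s.biUnion (fun c => ({forb c} : Finset X)ᶜ) :=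
          Finset.subset_biUnion_of_mem (fun c => ({forb c} : Finset X)ᶜ) hc0
        have hsne : s ≠ Finset.univ := by
          rintro rfl
          obtain ⟨c, c', hcc⟩ := h
          exact hcc (hs c (Finset.mem_univ c) c' (Finset.mem_univ c'))
        have h1 : s.card < Fintype.card X :=
          Finset.card_lt_card (Finset.ssubset_univ_iff.2 hsne)
        have h2 : (({forb c0} : Finset X)ᶜ).card = Fintype.card X - 1 := by
          rw [Finset.card_compl, Finset.card_singleton]
        calc s.card ≤ Fintype.card X - 1 := by omega
          _ = (({forb c0} : Finset X)ᶜ).card := h2.symm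
          _ ≤ _ := Finset.card_le_card hsub
  obtain ⟨g, hg, hmem⟩ := (Finset.all_card_le_biUnion_card_iff_exists_injective
      (fun c : X => ({forb c} : Finset X)ᶜ)).1 hcond
  exact ⟨g, hg, fun c => by simpa using hmem c⟩

lemma key_line {X : Type} [Fintype X] [DecidableEq X] {q m : ℕ}
    (hcard : Fintype.card X = q) (hq : 3 ≤ q) (hm : 1 ≤ m)
    (T : Finset (Fin m → X))
    (hT : ∀ x ∈ T, ∀ y ∈ T, ∃ j : Fin m, x j = y j)
    (hmax : T.card = q ^ (m - 1))
    (w : ZMod q → (Fin m → X))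
    (hw : ∀ s t, s ≠ t → ∀ i, w s i ≠ w t i) :
    ∃ t, w t ∈ T := by
  classical
  haveI : NeZero q := ⟨by omega⟩
  have hinj : ∀ i : Fin m, Function.Injective (fun t => w t i) := by
    intro i s t hst
    by_contra hne; exact hw s t hne i hst
  have hbij : ∀ i, Function.Bijective (fun t => w t i) := fun i =>
    (Fintype.bijective_iff_injective_and_card _).2 ⟨hinj i, by rw [ZMod.card, hcard]⟩
  let e : Fin m → (ZMod q ≃ X) := fun i => Equiv.ofBijective _ (hbij i)
  let Φ : (Fin m → ZMod q) ≃ (Fin m → X) := Equiv.piCongrRight e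
  let T' : Finset (Fin m → ZMod q) := Finset.univ.filter (fun u => Φ u ∈ T)
  have hmemT' : ∀ u, u ∈ T' ↔ Φ u ∈ T := by
    intro u; simp [T']
  have hcardT' : T'.card = q ^ (m - 1) := by
    rw [← hmax]
    apply Finset.card_bij' (fun u _ => Φ u) (fun x _ => Φ.symm x)
    · intro u hu; exact (hmemT' u).1 hu
    · intro x hx; exact (hmemT' _).2 (by simpa using hx)
    · intro u _; simp
    · intro x _; simp
  set j₀ : Fin m := ⟨0, hm⟩ with hj₀
  let ψ : (Fin m → ZMod q) → (Fin m → ZMod q) := fun u i => u i - u j₀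
  let S : Finset (Fin m → ZMod q) := Finset.univ.filter (fun y => y j₀ = 0)
  have hScard : S.card = q ^ (m - 1) := count_star q m (by rw [ZMod.card]) j₀ 0
  have hinjOn : Set.InjOn ψ T' := by
    intro u hu u' hu' heq
    have hu1 : Φ u ∈ T := (hmemT' u).1 hu
    have hu2 : Φ u' ∈ T := (hmemT' u').1 hu'
    obtain ⟨i, hi⟩ := hT _ hu1 _ hu2
    have hii : u i = u' i := (e i).injective hi
    have h0 : u j₀ = u' j₀ := by
      have h1 : u i - u j₀ = u' i - u' j₀ := congrFun heq i
      rw [hii] at h1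
      exact sub_right_injective h1
    funext k
    have h2 : u k - u j₀ = u' k - u' j₀ := congrFun heq k
    rw [h0] at h2
    exact sub_left_injective h2
  have himg : T'.image ψ ⊆ S := by
    intro y hy
    obtain ⟨u, hu, rfl⟩ := Finset.mem_image.1 hy
    simp [S, ψ]
  have hcardimg : (T'.image ψ).card = q ^ (m - 1) := by
    rw [Finset.card_image_of_injOn hinjOn, hcardT']
  have heqS : T'.image ψ = S := Finset.eq_of_subset_of_card_le himg (by rw [hScard, hcardimg])
  have h0S : (fun _ => (0 : ZMod q)) ∈ S := by simp [S]
  rw [← heqS] at h0S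
  obtain ⟨u, hu, hψu⟩ := Finset.mem_image.1 h0S
  have hconst : ∀ i, u i = u j₀ := by
    intro i
    have := congrFun hψu i
    simpa [ψ, sub_eq_zero] using this
  refine ⟨u j₀, ?_⟩
  have hΦ : Φ u = w (u j₀) := by
    funext i
    show e i (u i) = w (u j₀) i
    rw [hconst i]
    rfl
  rw [← hΦ]
  exact (hmemT' u).1 hu

lemma mem_of_meets {X : Type} [Fintype X] [DecidableEq X] {q m : ℕ}
    (hcard : Fintype.card X = q) (hq : 3 ≤ q) (hm : 1 ≤ m)
    (T : Finset (Fin m → X))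
    (hT : ∀ x ∈ T, ∀ y ∈ T, ∃ j : Fin m, x j = y j)
    (hmax : T.card = q ^ (m - 1))
    (x : Fin m → X) (hx : ∀ z ∈ T, ∃ i, x i = z i) : x ∈ T := by
  classical
  haveI : NeZero q := ⟨by omega⟩
  let ε : X ≃ ZMod q := Fintype.equivOfCardEq (by rw [hcard, ZMod.card])
  let w : ZMod q → (Fin m → X) := fun t i => ε.symm (ε (x i) + t)
  have hw : ∀ s t, s ≠ t → ∀ i, w s i ≠ w t i := by
    intro s t hst i h
    exact hst (by simpa using ε.symm.injective h)
  obtain ⟨t, ht⟩ := key_line hcard hq hm T hT hmax w hw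
  obtain ⟨i, hi⟩ := hx (w t) ht
  have : ε (x i) = ε (x i) + t := by
    have := congrArg ε hi
    simpa [w] using this
  have ht0 : t = 0 := (left_eq_add.1 this)
  have : w t = x := by
    funext i; simp [w, ht0]
  rwa [← this]

theorem stmt_2 (X : Type) [Fintype X] [DecidableEq X] (q m : ℕ)
    (hcard : Fintype.card X = q) (hq : 3 ≤ q) (hm : 1 ≤ m)
    (T : Finset (Fin m → X))
    (hT : ∀ x ∈ T, ∀ y ∈ T, ∃ j : Fin m, x j = y j)
    (hmax : T.card = q ^ (m - 1)) :
    ∃ (j : Fin m) (a : X), T = Finset.univ.filter (fun x : Fin m → X => x j = a) := by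
  classical
  haveI : NeZero q := ⟨by omega⟩
  -- a helper to find an element of X avoiding two given ones
  have havoid : ∀ a b : X, ∃ c : X, c ≠ a ∧ c ≠ b := by
    intro a b
    have hcard2 : ({a, b} : Finset X).card ≤ 2 := by
      apply le_trans (Finset.card_insert_le _ _)
      simp
    have : (({a, b} : Finset X)ᶜ).Nonempty := by
      rw [← Finset.card_pos, Finset.card_compl, hcard]
      omega
    obtain ⟨c, hc⟩ := this
    simp only [Finset.mem_compl, Finset.mem_insert, Finset.mem_singleton, not_or] at hc
    exact ⟨c, hc.1, hc.2⟩
  by_cases hcase : ∃ x ∈ T, ∃ y ∈ T, ∃ j : Fin m, ∀ i, i ≠ j → x i ≠ y i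
  · obtain ⟨x, hx, y, hy, j, hxy⟩ := hcase
    have hja : x j = y j := by
      obtain ⟨i, hi⟩ := hT x hx y hy
      by_cases h : i = j
      · rwa [h] at hi
      · exact absurd hi (hxy i h)
    refine ⟨j, x j, ?_⟩
    have hsub : T ⊆ Finset.univ.filter (fun z => z j = x j) := by
      intro v hv
      simp only [Finset.mem_filter, Finset.mem_univ, true_and]
      by_contra hvj
      -- Claim D: build q pairwise disjoint words all avoiding T
      obtain ⟨c₀, hc₀a, hc₀b⟩ := havoid (x j) (v j)
      set cert : X → (Fin m → X) := fun c => if c = x j then v else if c = c₀ then y else x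
        with hcert
      have hcertT : ∀ c, cert c ∈ T := by
        intro c
        by_cases h1 : c = x j
        · simpa [hcert, h1] using hv
        · by_cases h2 : c = c₀
          · simpa [hcert, h1, h2, hc₀a] using hy
          · simpa [hcert, h1, h2] using hx
      set forb : Fin m → X → X := fun i c => cert c i with hforb
      have hnc : ∀ i : Fin m, ∃ c c', forb i c ≠ forb i c' := by
        intro i
        by_cases h : i = j
        · refine ⟨x j, c₀, ?_⟩
          rw [h]
          have h1 : forb j (x j) = v j := by simp [hforb, hcert]
          have h2 : forb j c₀ = y j := by simp [hforb, hcert, hc₀a]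
          rw [h1, h2, ← hja]
          exact fun hc => hvj hc
        · obtain ⟨c₁, hc₁a, hc₁c₀⟩ := havoid (x j) c₀
          refine ⟨c₀, c₁, ?_⟩
          have h1 : forb i c₀ = y i := by simp [hforb, hcert, hc₀a]
          have h2 : forb i c₁ = x i := by simp [hforb, hcert, hc₁a, hc₁c₀]
          rw [h1, h2]
          exact fun hc => hxy i h hc.symm
      choose g hginj hgav using fun i => exists_inj_avoid (forb i) (hnc i)
      set W : X → (Fin m → X) := fun c i => if i = j then c else g i c with hW
      have hWdisj : ∀ c, ∀ i, W c i ≠ cert c i := by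
        intro c i
        by_cases h : i = j
        · rw [h]
          have hWj : W c j = c := by simp [hW]
          by_cases h1 : c = x j
          · have h3 : cert c j = v j := by simp [hcert, h1]
            rw [hWj, h3, h1]
            exact fun hc => hvj hc.symm
          · by_cases h2 : c = c₀
            · have h3 : cert c j = y j := by simp [hcert, h1, h2, hc₀a]
              rw [hWj, h3, ← hja]
              exact h1
            · have h3 : cert c j = x j := by simp [hcert, h1, h2]
              rw [hWj, h3]
              exact h1
        · simp only [hW, if_neg h]
          exact hgav i c
      have hWnT : ∀ c, W c ∉ T := by
        intro c hWc
        obtain ⟨i, hi⟩ := hT _ hWc _ (hcertT c)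
        exact hWdisj c i hi
      let ε : X ≃ ZMod q := Fintype.equivOfCardEq (by rw [hcard, ZMod.card])
      have hw : ∀ s t, s ≠ t → ∀ i, W (ε.symm s) i ≠ W (ε.symm t) i := by
        intro s t hst i
        have hcc : ε.symm s ≠ ε.symm t := fun h => hst (ε.symm.injective h)
        by_cases h : i = j
        · subst h
          simpa [hW] using hcc
        · simp only [hW, if_neg h]
          exact fun hc => hcc (hginj i hc)
      obtain ⟨t, ht⟩ := key_line hcard hq hm T hT hmax (fun t => W (ε.symm t)) hw
      exact hWnT _ ht
    exact (Finset.eq_of_subset_of_card_le hsub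
      (by rw [count_star q m hcard j (x j), hmax]))
  · push_neg at hcase
    have hP : ∀ x ∈ T, ∀ y ∈ T, ∀ l : Fin m, ∃ i, i ≠ l ∧ x i = y i := by
      intro x hx y hy l
      obtain ⟨i, hil, hi⟩ := hcase x hx y hy l
      exact ⟨i, hil, hi⟩
    have hTne : T.Nonempty := by
      rw [← Finset.card_pos, hmax]
      positivity
    obtain ⟨x₀, hx₀⟩ := hTne
    have hupd : ∀ w ∈ T, ∀ (l : Fin m) (c : X), Function.update w l c ∈ T := by
      intro w hw l c
      apply mem_of_meets hcard hq hm T hT hmax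
      intro z hz
      obtain ⟨i, hil, hiz⟩ := hP z hz w hw l
      exact ⟨i, by rw [Function.update_of_ne hil]; exact hiz.symm⟩
    have hall : ∀ (n : ℕ) (v : Fin m → X),
        (Finset.univ.filter fun i => v i ≠ x₀ i).card = n → v ∈ T := by
      intro n
      induction n with
      | zero =>
        intro v hv
        have hv0 : v = x₀ := by
          funext i
          by_contra h
          have : i ∈ Finset.univ.filter fun i => v i ≠ x₀ i := by simp [h]
          rw [Finset.card_eq_zero.1 hv] at this
          exact absurd this (Finset.notMem_empty i)
        rwa [hv0]
      | succ n ih =>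
        intro v hv
        have hne : (Finset.univ.filter fun i => v i ≠ x₀ i).Nonempty := by
          rw [← Finset.card_pos, hv]; omega
        obtain ⟨l, hl⟩ := hne
        have hvl : v l ≠ x₀ l := (Finset.mem_filter.1 hl).2
        set v' := Function.update v l (x₀ l) with hv'
        have hfilter : (Finset.univ.filter fun i => v' i ≠ x₀ i)
            = (Finset.univ.filter fun i => v i ≠ x₀ i).erase l := by
          ext i
          simp only [Finset.mem_filter, Finset.mem_univ, true_and, Finset.mem_erase]
          by_cases h : i = l
          · subst h
            simp [hv', Function.update_self]
          · simp [hv', Function.update_of_ne h, h]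
        have hcard' : (Finset.univ.filter fun i => v' i ≠ x₀ i).card = n := by
          rw [hfilter, Finset.card_erase_of_mem hl, hv]
          omega
        have hv'T := ih v' hcard'
        have hvv : Function.update v' l (v l) = v := by
          funext i
          by_cases h : i = l
          · subst h; simp [Function.update_self]
          · simp [Function.update_of_ne h, hv']
        rw [← hvv]
        exact hupd v' hv'T l (v l)
    -- contradiction: T contains two disjoint words
    haveI : Fact (1 < q) := ⟨by omega⟩
    let ε : X ≃ ZMod q := Fintype.equivOfCardEq (by rw [hcard, ZMod.card])
    let x₁ : Fin m → X := fun i => ε.symm (ε (x₀ i) + 1)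
    have hx₁ : x₁ ∈ T := hall _ x₁ rfl
    obtain ⟨i, hi⟩ := hT x₀ hx₀ x₁ hx₁
    have : ε (x₀ i) = ε (x₀ i) + 1 := by
      have := congrArg ε hi
      simpa [x₁] using this
    have h10 : (1 : ZMod q) = 0 := (left_eq_add.1 this)
    exact absurd h10 one_ne_zero
end

section
/- Every 3-wise intersecting family T ⊆ {0,1}^m of maximum size 2^(m-1) is a star: there exist a coordinate j and a bit u such that T = {x ∈ {0,1}^m : x_j = u}. -/
theorem stmt_3 (m : ℕ) (hm : 1 ≤ m) (T : Finset (Fin m → Bool))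
    (hT : ∀ x ∈ T, ∀ y ∈ T, ∀ z ∈ T, ∃ j : Fin m, x j = y j ∧ y j = z j)
    (hmax : T.card = 2 ^ (m - 1)) :
    ∃ (j : Fin m) (u : Bool), T = Finset.univ.filter (fun x : Fin m → Bool => x j = u) := by
  set c : (Fin m → Bool) → (Fin m → Bool) := fun v i => !(v i) with hc
  have hcinj : Function.Injective c := by
    intro a b h
    funext i
    have := congrFun h i
    simpa [hc] using this
  have hno : ∀ v ∈ T, c v ∉ T := by
    intro v hv hcv
    obtain ⟨j, h1, h2⟩ := hT v hv v hv (c v) hcv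
    simp [hc] at h2
  have hcard : (T ∪ T.image c).card = Fintype.card (Fin m → Bool) := by
    rw [Finset.card_union_of_disjoint, Finset.card_image_of_injective _ hcinj, hmax,
      Fintype.card_fun]
    · simp only [Fintype.card_bool, Fintype.card_fin]
      have : 2 ^ (m - 1) * 2 = 2 ^ m := by
        rw [← pow_succ]
        congr 1
        omega
      omega
    · rw [Finset.disjoint_right]
      intro w hw
      obtain ⟨v, hv, rfl⟩ := Finset.mem_image.mp hw
      exact hno v hv
  have huniv : T ∪ T.image c = Finset.univ :=
    Finset.eq_univ_of_card _ (by rw [hcard])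
  have hcompl : ∀ v, v ∉ T → c v ∈ T := by
    intro v hv
    have hmem : v ∈ T ∪ T.image c := huniv ▸ Finset.mem_univ v
    rcases Finset.mem_union.mp hmem with h | h
    · exact absurd h hv
    · obtain ⟨w, hw, hwe⟩ := Finset.mem_image.mp h
      have hwv : c v = w := by
        funext i
        have := congrFun hwe i
        simp only [hc] at this ⊢
        rw [← this]
        simp
      rwa [hwv]
  have hcube : ∀ x ∈ T, ∀ y ∈ T, ∀ z, (∀ j, x j = y j → z j = x j) → z ∈ T := by
    intro x hx y hy z hz
    by_contra hzT
    have hcz := hcompl z hzT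
    obtain ⟨j, h1, h2⟩ := hT x hx y hy (c z) hcz
    have h3 := hz j h1
    simp only [hc] at h2
    rw [h3, ← h1] at h2
    exact Bool.not_ne_self _ h2.symm
  have hTne : T.Nonempty := Finset.card_pos.mp (by rw [hmax]; positivity)
  obtain ⟨p, hp, hmin⟩ := Finset.exists_min_image (T ×ˢ T)
      (fun p => (Finset.univ.filter fun j => p.1 j = p.2 j).card)
      (hTne.product hTne)
  obtain ⟨hx, hy⟩ := Finset.mem_product.mp hp
  set x := p.1 with hxdef
  set y := p.2 with hydef
  set A := Finset.univ.filter fun j => x j = y j with hA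
  have hAne : A.Nonempty := by
    obtain ⟨j, h1, _⟩ := hT x hx y hy y hy
    exact ⟨j, by simp [hA, h1]⟩
  obtain ⟨j, hjA⟩ := hAne
  have hjxy : x j = y j := by simpa [hA] using hjA
  have hall : ∀ w ∈ T, w j = x j := by
    intro w hw
    by_contra hne
    set z : Fin m → Bool := fun i => if x i = y i then x i else !(w i) with hz
    have hzT : z ∈ T := hcube x hx y hy z (fun i hi => by simp [hz, hi])
    have hsub : (Finset.univ.filter fun i => z i = w i) ⊆ A.erase j := by
      intro i hi
      simp only [Finset.mem_filter, Finset.mem_univ, true_and, hz] at hi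
      by_cases hxy : x i = y i
      · simp only [hxy, if_true] at hi
        refine Finset.mem_erase.mpr ⟨?_, by simp [hA, hxy]⟩
        rintro rfl
        exact hne (by rw [← hi, ← hxy])
      · simp only [hxy, if_false] at hi
        exact absurd hi (by simp)
    have hlt : (Finset.univ.filter fun i => z i = w i).card < A.card :=
      lt_of_le_of_lt (Finset.card_le_card hsub) (Finset.card_erase_lt_of_mem hjA)
    have := hmin (z, w) (Finset.mem_product.mpr ⟨hzT, hw⟩)
    simp only at this
    omega
  refine ⟨j, x j, ?_⟩
  ext v
  simp only [Finset.mem_filter, Finset.mem_univ, true_and]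
  constructor
  · exact fun hv => hall v hv
  · intro hv
    by_contra hvT
    have h := hall (c v) (hcompl v hvT)
    simp only [hc] at h
    rw [hv] at h
    exact Bool.not_ne_self _ h
end

section
/- Let T ⊆ {0,1}^m be a 3-wise intersecting family with |T| = 2^(m-1) that is not a star. Then for every 0 ≤ k ≤ m-1 and every δ ∈ {0,1}^k, the number of words in T whose first k coordinates equal δ is exactly 2^(m-k-1). -/
/-!
Induct on the set `S` of fixed coordinates. Splitting a slice `T ∩ subcube S δ` along a new
coordinate `j`, it suffices that each half fills at most half of its subcube `C`. Flipping all free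
coordinates maps the half injectively into `C`; if a flipped word is still in `T`, then every word
of `T` agrees with `δ` somewhere on `insert j S`. As `T` has no complementary pair and half the size
of the cube, it contains one word of each pair, and this forces `C ⊆ T`. The induction hypothesis
applied to the pattern `δᶜ` then also puts the subcube with pattern `δᶜ` on `S` and `δ j` at `j`
into `T`, and a word of `T` together with one word from each of these subcubes can only agree at
`j`: `T` is the star at `j`.
-/

open Finset Function

section Subcube

variable {ι : Type*} [DecidableEq ι]

lemma piecewise_compl_injective (S : Finset ι) :
    Injective fun x : ι → Bool => S.piecewise x xᶜ := by
  intro x y hxy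
  funext i
  have := congrFun hxy i
  by_cases hi : i ∈ S <;> simpa [hi] using this

variable [Fintype ι]

def subcube (S : Finset ι) (δ : ι → Bool) : Finset (ι → Bool) :=
  Fintype.piFinset fun i => if i ∈ S then {δ i} else univ

@[simp]
lemma mem_subcube {S : Finset ι} {δ x : ι → Bool} : x ∈ subcube S δ ↔ ∀ i ∈ S, x i = δ i := by
  simp only [subcube, Fintype.mem_piFinset]
  refine forall_congr' fun i => ?_
  split_ifs with hi <;> simp [hi]

lemma card_subcube (S : Finset ι) (δ : ι → Bool) :
    #(subcube S δ) = 2 ^ (Fintype.card ι - #S) := by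
  have hfactor (i : ι) : #(if i ∈ S then {δ i} else univ) = if i ∈ Sᶜ then 2 else 1 := by
    by_cases hi : i ∈ S <;> simp [hi]
  simp only [subcube, Fintype.card_piFinset, hfactor, Fintype.prod_ite_mem, prod_const, card_compl]

lemma card_inter_subcube_insert (T : Finset (ι → Bool)) {S : Finset ι} {j : ι} (hj : j ∉ S)
    (δ : ι → Bool) :
    #(T ∩ subcube S δ) =
      #(T ∩ subcube (insert j S) δ) + #(T ∩ subcube (insert j S) (update δ j (!δ j))) := by
  have hupdate : ∀ i ∈ S, update δ j (!δ j) i = δ i :=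
    fun i hi => update_of_ne (ne_of_mem_of_not_mem hi hj) _ _
  rw [← card_filter_add_card_filter_not (fun x => x j = δ j)]
  congr 2 <;> ext x
  · simp only [mem_filter, mem_inter, mem_subcube, forall_mem_insert]
    tauto
  · simp +contextual only [mem_filter, mem_inter, mem_subcube, forall_mem_insert, update_self,
      hupdate, Bool.eq_not]
    tauto

lemma eq_filter_apply_eq_of_forall {T : Finset (ι → Bool)} (hmax : #T = 2 ^ (Fintype.card ι - 1))
    {j : ι} {b : Bool} (h : ∀ z ∈ T, z j = b) : T = univ.filter fun x => x j = b := by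
  have hstar : univ.filter (fun x => x j = b) = subcube {j} fun _ => b := by ext; simp
  refine eq_of_subset_of_card_le (fun z hz => mem_filter.mpr ⟨mem_univ z, h z hz⟩) ?_
  rw [hstar, card_subcube, card_singleton, hmax]

end Subcube

def IsThreeWiseIntersecting {ι α : Type*} (T : Finset (ι → α)) : Prop :=
  ∀ x ∈ T, ∀ y ∈ T, ∀ z ∈ T, ∃ j, x j = y j ∧ y j = z j

namespace IsThreeWiseIntersecting

section

variable {ι : Type*} {T : Finset (ι → Bool)}

lemma compl_notMem (hT : IsThreeWiseIntersecting T) {x : ι → Bool} (hx : x ∈ T) : xᶜ ∉ T :=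
  fun hxc => by
    obtain ⟨j, -, hj⟩ := hT x hx x hx xᶜ hxc
    simp at hj

lemma nonempty_index (hT : IsThreeWiseIntersecting T) (hne : T.Nonempty) : Nonempty ι := by
  obtain ⟨x, hx⟩ := hne
  obtain ⟨j, -⟩ := hT x hx x hx x hx
  exact ⟨j⟩

lemma exists_mem_apply_eq_of_piecewise_compl_mem [DecidableEq ι] (hT : IsThreeWiseIntersecting T)
    {S : Finset ι} {x z : ι → Bool} (hx : x ∈ T) (hflip : S.piecewise x xᶜ ∈ T) (hz : z ∈ T) :
    ∃ i ∈ S, z i = x i := by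
  obtain ⟨i, hzx, hflip⟩ := hT z hz x hx _ hflip
  by_cases hi : i ∈ S
  · exact ⟨i, hi, hzx⟩
  · simp [hi] at hflip

end

variable {ι : Type*} [Fintype ι] [DecidableEq ι] {T : Finset (ι → Bool)}

lemma compl_mem_iff (hT : IsThreeWiseIntersecting T) (hmax : #T = 2 ^ (Fintype.card ι - 1))
    {x : ι → Bool} : xᶜ ∈ T ↔ x ∉ T := by
  refine ⟨fun hxc hx => hT.compl_notMem hx hxc, fun hx => ?_⟩
  have : Nonempty ι := hT.nonempty_index (card_pos.mp (by rw [hmax]; positivity))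
  have hdisj : Disjoint T (T.image compl) := by
    simp only [disjoint_left, mem_image, not_exists, not_and]
    rintro y hy z hz rfl
    exact hT.compl_notMem hz hy
  have hcover : T ∪ T.image compl = univ := by
    apply eq_univ_of_card
    rw [card_union_of_disjoint hdisj, card_image_of_injective _ compl_injective, hmax,
      Fintype.card_fun, Fintype.card_bool, ← two_mul, ← pow_succ',
      Nat.sub_add_cancel Fintype.card_pos]
  have : x ∈ T ∪ T.image compl := hcover ▸ mem_univ x
  simp only [mem_union, hx, mem_image, false_or] at this
  obtain ⟨y, hy, rfl⟩ := this
  rwa [compl_compl]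

lemma subcube_subset_iff (hT : IsThreeWiseIntersecting T) (hmax : #T = 2 ^ (Fintype.card ι - 1))
    {S : Finset ι} {δ : ι → Bool} : subcube S δ ⊆ T ↔ ∀ z ∈ T, ∃ i ∈ S, z i = δ i := by
  constructor
  · intro hδ z hz
    have hu : S.piecewise δ zᶜ ∈ T := hδ (by simp +contextual)
    have hv : S.piecewise δ z ∈ T := hδ (by simp +contextual)
    obtain ⟨i, hzu, huv⟩ := hT z hz _ hu _ hv
    by_cases hi : i ∈ S
    · exact ⟨i, hi, by simpa [hi] using hzu⟩
    · simp [hi] at huv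
  · intro h w hw
    by_contra hwT
    obtain ⟨i, hi, hwi⟩ := h wᶜ ((hT.compl_mem_iff hmax).mpr hwT)
    simp [mem_subcube.mp hw i hi] at hwi

lemma apply_eq_of_subcube_subset (hT : IsThreeWiseIntersecting T) {S : Finset ι} {a b : ι → Bool}
    {j : ι} (ha : subcube S a ⊆ T) (hb : subcube S b ⊆ T) (hab : ∀ i ∈ S, i ≠ j → a i ≠ b i)
    {z : ι → Bool} (hz : z ∈ T) : z j = a j := by
  have hu : S.piecewise a zᶜ ∈ T := ha (by simp +contextual)
  have hv : S.piecewise b zᶜ ∈ T := hb (by simp +contextual)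
  obtain ⟨i, hzu, huv⟩ := hT z hz _ hu _ hv
  by_cases hi : i ∈ S
  · by_cases hij : i = j
    · subst hij
      simpa [hi] using hzu
    · simp only [piecewise_eq_of_mem _ _ _ hi] at huv
      exact absurd huv (hab i hi hij)
  · simp [hi] at hzu

lemma subcube_update_compl_subset (hT : IsThreeWiseIntersecting T)
    (hmax : #T = 2 ^ (Fintype.card ι - 1)) {S : Finset ι} {j : ι} (hj : j ∉ S) {δ : ι → Bool}
    (hcard : #(T ∩ subcube S δᶜ) = 2 ^ (Fintype.card ι - #S - 1))
    (hδ : subcube (insert j S) δ ⊆ T) :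
    subcube (insert j S) (update δᶜ j (δ j)) ⊆ T := by
  have hupdate : ∀ i ∈ S, update δᶜ j (δ j) i = !δ i :=
    fun i hi => update_of_ne (ne_of_mem_of_not_mem hi hj) _ _
  have hsub : T ∩ subcube S δᶜ ⊆ subcube (insert j S) (update δᶜ j (δ j)) := by
    intro z hz
    obtain ⟨hzT, hzS⟩ := mem_inter.mp hz
    rw [mem_subcube] at hzS
    obtain ⟨i, hi, hzi⟩ := (hT.subcube_subset_iff hmax).mp hδ z hzT
    rcases mem_insert.mp hi with rfl | hiS
    · simpa +contextual [forall_mem_insert, hzi, hupdate] using hzS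
    · simp [hzS i hiS] at hzi
  have heq := eq_of_subset_of_card_le hsub <| by
    rw [card_subcube, hcard, card_insert_of_notMem hj, Nat.sub_sub]
  exact heq ▸ inter_subset_left

lemma two_mul_card_inter_subcube_le (hT : IsThreeWiseIntersecting T)
    (hmax : #T = 2 ^ (Fintype.card ι - 1))
    (hstar : ¬ ∃ (j : ι) (b : Bool), T = univ.filter fun x => x j = b)
    {S : Finset ι} {j : ι} (hj : j ∉ S)
    (hS : ∀ δ, #(T ∩ subcube S δ) = 2 ^ (Fintype.card ι - #S - 1)) (δ : ι → Bool) :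
    2 * #(T ∩ subcube (insert j S) δ) ≤ 2 ^ (Fintype.card ι - #S - 1) := by
  set A := T ∩ subcube (insert j S) δ
  by_cases hflip : ∃ x ∈ A, (insert j S).piecewise x xᶜ ∈ T
  · exfalso
    obtain ⟨x, hxA, hx⟩ := hflip
    obtain ⟨hxT, hxδ⟩ := mem_inter.mp hxA
    have hδ : subcube (insert j S) δ ⊆ T := (hT.subcube_subset_iff hmax).mpr fun z hz => by
      obtain ⟨i, hi, hzi⟩ := hT.exists_mem_apply_eq_of_piecewise_compl_mem hxT hx hz
      exact ⟨i, hi, hzi.trans (mem_subcube.mp hxδ i hi)⟩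
    have hw := hT.subcube_update_compl_subset hmax hj (hS δᶜ) hδ
    have hdiff : ∀ i ∈ insert j S, i ≠ j → δ i ≠ update δᶜ j (δ j) i := fun i _ hij => by
      simp [update_of_ne hij]
    exact hstar ⟨j, δ j, eq_filter_apply_eq_of_forall hmax
      fun z hz => hT.apply_eq_of_subcube_subset hδ hw hdiff hz⟩
  · simp only [not_exists, not_and] at hflip
    set flipFree := fun x : ι → Bool => (insert j S).piecewise x xᶜ
    have hdisj : Disjoint A (A.image flipFree) := by
      simp only [disjoint_left, mem_image, not_exists, not_and]
      rintro _ hyA x hxA rfl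
      exact hflip x hxA (mem_inter.mp hyA).1
    have hsub : A ∪ A.image flipFree ⊆ subcube (insert j S) δ := by
      refine union_subset inter_subset_right fun y hy => ?_
      obtain ⟨x, hxA, rfl⟩ := mem_image.mp hy
      have hxδ := mem_subcube.mp (mem_inter.mp hxA).2
      simp +contextual [flipFree, hxδ]
    calc 2 * #A = #(A ∪ A.image flipFree) := by
          rw [card_union_of_disjoint hdisj, card_image_of_injective _ (piecewise_compl_injective _),
            two_mul]
      _ ≤ #(subcube (insert j S) δ) := card_le_card hsub
      _ = 2 ^ (Fintype.card ι - #S - 1) := by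
          rw [card_subcube, card_insert_of_notMem hj, Nat.sub_sub]

theorem card_inter_subcube (hT : IsThreeWiseIntersecting T)
    (hmax : #T = 2 ^ (Fintype.card ι - 1))
    (hstar : ¬ ∃ (j : ι) (b : Bool), T = univ.filter fun x => x j = b)
    (S : Finset ι) (hS : #S ≤ Fintype.card ι - 1) (δ : ι → Bool) :
    #(T ∩ subcube S δ) = 2 ^ (Fintype.card ι - #S - 1) := by
  induction S using Finset.induction_on generalizing δ with
  | empty =>
    rwa [inter_eq_left.mpr fun x _ => mem_subcube.mpr (by simp), card_empty, Nat.sub_zero]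
  | insert j S hj ih =>
    rw [card_insert_of_notMem hj] at hS ⊢
    have ih := ih (by omega)
    have hsplit := card_inter_subcube_insert T hj δ
    have hδ := hT.two_mul_card_inter_subcube_le hmax hstar hj ih δ
    have hδ' := hT.two_mul_card_inter_subcube_le hmax hstar hj ih (update δ j (!δ j))
    have hpow : 2 ^ (Fintype.card ι - #S - 1) = 2 * 2 ^ (Fintype.card ι - (#S + 1) - 1) := by
      rw [← pow_succ']
      congr 1
      omega
    rw [ih δ, hpow] at hsplit
    rw [hpow] at hδ hδ'
    omega

end IsThreeWiseIntersecting

theorem stmt_5_general (m : ℕ) (T : Finset (Fin m → Bool))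
    (hT : ∀ x ∈ T, ∀ y ∈ T, ∀ z ∈ T, ∃ j : Fin m, x j = y j ∧ y j = z j)
    (hmax : T.card = 2 ^ (m - 1))
    (hnotstar : ¬ ∃ (j : Fin m) (u : Bool),
      T = Finset.univ.filter (fun x : Fin m → Bool => x j = u))
    (k : ℕ) (hk : k ≤ m - 1) (δ : Fin k → Bool) :
    (T.filter (fun x => ∀ i : Fin k,
        x (Fin.castLE (le_trans hk (Nat.sub_le m 1)) i) = δ i)).card = 2 ^ (m - k - 1) := by
  have hkm : k ≤ m := le_trans hk (Nat.sub_le m 1)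
  set δ' : Fin m → Bool := extend (Fin.castLE hkm) δ fun _ => false
  have hprefix : T.filter (fun x => ∀ i : Fin k, x (Fin.castLE hkm i) = δ i) =
      T ∩ subcube (univ.map (Fin.castLEEmb hkm)) δ' := by
    ext x
    simp [δ', (Fin.castLE_injective hkm).extend_apply]
  have hmax' : #T = 2 ^ (Fintype.card (Fin m) - 1) := by rwa [Fintype.card_fin]
  rw [hprefix, IsThreeWiseIntersecting.card_inter_subcube hT hmax' hnotstar _ (by simpa) δ']
  simp

theorem stmt_5 (m : ℕ) (hm : 1 ≤ m) (T : Finset (Fin m → Bool))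
    (hT : ∀ x ∈ T, ∀ y ∈ T, ∀ z ∈ T, ∃ j : Fin m, x j = y j ∧ y j = z j)
    (hmax : T.card = 2 ^ (m - 1))
    (hnotstar : ¬ ∃ (j : Fin m) (u : Bool),
      T = Finset.univ.filter (fun x : Fin m → Bool => x j = u))
    (k : ℕ) (hk : k ≤ m - 1) (δ : Fin k → Bool) :
    (T.filter (fun x => ∀ i : Fin k,
        x (Fin.castLE (le_trans hk (Nat.sub_le m 1)) i) = δ i)).card = 2 ^ (m - k - 1) :=
  stmt_5_general m T hT hmax hnotstar k hk δ
end

section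
/- Let T ⊆ (Z/qZ)^m be intersecting with q ≥ 2, m ≥ 2, and define T̃_i = {(x_2,...,x_m) : (i, x_2,...,x_m) ∈ T} for i ∈ Z/qZ. If for some i and some δ ∈ (Z/qZ)^(m-1) the set S(δ) = {δ + c̄ : c ∈ Z/qZ} satisfies |S(δ) ∩ T̃_i| ≥ 2, then S(δ) ∩ T̃_j = ∅ for every j ≠ i. -/
theorem stmt_14 (q n : ℕ) [NeZero q] (hq : 2 ≤ q) (hn : 1 ≤ n)
    (T : Finset (Fin (n + 1) → ZMod q))
    (hT : ∀ x ∈ T, ∀ y ∈ T, ∃ j : Fin (n + 1), x j = y j)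
    (i : ZMod q) (δ : Fin n → ZMod q)
    (h2 : 2 ≤ ((Finset.univ.image (fun c : ZMod q => fun k => δ k + c)) ∩
      Finset.univ.filter (fun xs : Fin n → ZMod q => Fin.cons i xs ∈ T)).card) :
    ∀ j : ZMod q, j ≠ i →
      (Finset.univ.image (fun c : ZMod q => fun k => δ k + c)) ∩
        Finset.univ.filter (fun xs : Fin n → ZMod q => Fin.cons j xs ∈ T) = ∅ := by
  intro j hji
  obtain ⟨a, ha, b, hb, hab⟩ := Finset.one_lt_card.mp h2
  rw [Finset.mem_inter, Finset.mem_image, Finset.mem_filter] at ha hb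
  obtain ⟨⟨c1, _, hc1⟩, _, haT⟩ := ha
  obtain ⟨⟨c2, _, hc2⟩, _, hbT⟩ := hb
  rw [Finset.eq_empty_iff_forall_notMem]
  intro y hy
  rw [Finset.mem_inter, Finset.mem_image, Finset.mem_filter] at hy
  obtain ⟨⟨c, _, hc⟩, _, hyT⟩ := hy
  have key : ∀ (c' : ZMod q) (x : Fin n → ZMod q),
      x = (fun k => δ k + c') → Fin.cons i x ∈ T → c' = c := by
    intro c' x hx hxT
    obtain ⟨k, hk⟩ := hT _ hxT _ hyT
    refine Fin.cases ?_ ?_ k hk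
    · intro h0
      simp only [Fin.cons_zero] at h0
      exact absurd h0.symm hji
    · intro l hl
      simp only [Fin.cons_succ] at hl
      subst hx; subst hc
      exact add_left_cancel hl
  have h1 := key c1 a hc1.symm haT
  have h2' := key c2 b hc2.symm hbT
  apply hab
  rw [← hc1, ← hc2, h1, h2']
end

section
/- Let T ⊆ (Z/qZ)^m be intersecting, q ≥ 2, m ≥ 2, and T̃_i = {(x_2,...,x_m) : (i,x_2,...,x_m) ∈ T}. Then for every δ ∈ (Z/qZ)^(m-1), the sum over i ∈ Z/qZ of |T̃_i ∩ S(δ)| is at most q, where S(δ) = {δ + c̄ : c ∈ Z/qZ}. -/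
theorem stmt_15 (q n : ℕ) [NeZero q] (hq : 2 ≤ q) (hn : 1 ≤ n)
    (T : Finset (Fin (n + 1) → ZMod q))
    (hT : ∀ x ∈ T, ∀ y ∈ T, ∃ j : Fin (n + 1), x j = y j)
    (δ : Fin n → ZMod q) :
    ∑ i : ZMod q,
      ((Finset.univ.filter (fun xs : Fin n → ZMod q => Fin.cons i xs ∈ T)) ∩
        Finset.univ.image (fun c : ZMod q => fun k => δ k + c)).card ≤ q := by
  classical
  have hinj : Function.Injective (fun c : ZMod q => (fun k => δ k + c : Fin n → ZMod q)) := by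
    intro c c' h
    have := congrFun h ⟨0, hn⟩
    simpa using this
  have key : ∀ i : ZMod q,
      ((Finset.univ.filter (fun xs : Fin n → ZMod q => Fin.cons i xs ∈ T)) ∩
        Finset.univ.image (fun c : ZMod q => fun k => δ k + c)).card
      = (Finset.univ.filter (fun c : ZMod q =>
          Fin.cons i (fun k => δ k + c) ∈ T)).card := by
    intro i
    rw [← Finset.card_image_of_injective _ hinj]
    congr 1
    ext x
    simp only [Finset.mem_inter, Finset.mem_filter, Finset.mem_image, Finset.mem_univ,
      true_and]
    constructor
    · rintro ⟨hx, c, rfl⟩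
      exact ⟨c, hx, rfl⟩
    · rintro ⟨c, hc, rfl⟩
      exact ⟨hc, c, rfl⟩
  simp only [key]
  set P : ZMod q × ZMod q → Prop :=
    fun p => Fin.cons p.1 (fun k => δ k + p.2) ∈ T with hP
  have hsum : ∑ i : ZMod q, (Finset.univ.filter (fun c : ZMod q =>
      Fin.cons i (fun k => δ k + c) ∈ T)).card
      = (Finset.univ.filter P).card := by
    rw [Finset.card_filter, Fintype.sum_prod_type]
    refine Finset.sum_congr rfl fun i _ => ?_
    rw [Finset.card_filter]
  rw [hsum]
  have hle : (Finset.univ.filter P).card ≤ (Finset.univ : Finset (ZMod q)).card := by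
    apply Finset.card_le_card_of_injOn (fun p => p.1 - p.2)
    · intro p _; exact Finset.mem_univ _
    · intro p hp p' hp' heq
      simp only [Finset.mem_coe, Finset.mem_filter, Finset.mem_univ, true_and, hP] at hp hp'
      obtain ⟨j, hj⟩ := hT _ hp _ hp'
      have h2 : p.2 = p'.2 := by
        induction j using Fin.cases with
        | zero =>
          simp only [Fin.cons_zero] at hj
          have : p.1 - p.2 = p'.1 - p'.2 := heq
          rw [hj] at this
          linear_combination -this
        | succ k =>
          simp only [Fin.cons_succ] at hj
          linear_combination hj
      have h1 : p.1 = p'.1 := by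
        have : p.1 - p.2 = p'.1 - p'.2 := heq
        rw [h2] at this
        linear_combination this
      exact Prod.ext h1 h2
  simpa using hle
end

section
/- Let T ⊆ {0,1}^m be 3-wise intersecting and not a star, with |T| = 2^(m-1), and fix δ ∈ {0,1}^k (1 ≤ k ≤ m-1). If the suffix set T̃_δ = {(x_{k+1},...,x_m) : (δ, x_{k+1},...,x_m) ∈ T} is nonempty and T̃_{1-δ} (suffixes extending the bitwise complement of δ) is nonempty, then T̃_δ is an intersecting family in {0,1}^(m-k), and hence |T̃_δ| ≤ 2^(m-k-1). -/
theorem stmt_17 (k n : ℕ) (hk : 1 ≤ k) (hn : 1 ≤ n)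
    (T : Finset (Fin (k + n) → Bool))
    (hT : ∀ x ∈ T, ∀ y ∈ T, ∀ z ∈ T, ∃ j : Fin (k + n), x j = y j ∧ y j = z j)
    (hmax : T.card = 2 ^ (k + n - 1))
    (hnotstar : ¬ ∃ (j : Fin (k + n)) (u : Bool),
      T = Finset.univ.filter (fun x : Fin (k + n) → Bool => x j = u))
    (δ : Fin k → Bool)
    (h1 : (Finset.univ.filter
      (fun s : Fin n → Bool => Fin.append δ s ∈ T)).Nonempty)
    (h2 : (Finset.univ.filter
      (fun s : Fin n → Bool => Fin.append (fun i => !(δ i)) s ∈ T)).Nonempty) :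
    (∀ s ∈ Finset.univ.filter (fun s : Fin n → Bool => Fin.append δ s ∈ T),
      ∀ t ∈ Finset.univ.filter (fun s : Fin n → Bool => Fin.append δ s ∈ T),
        ∃ j : Fin n, s j = t j) ∧
    (Finset.univ.filter (fun s : Fin n → Bool => Fin.append δ s ∈ T)).card ≤ 2 ^ (n - 1) := by
  obtain ⟨w, hw⟩ := h2
  simp only [Finset.mem_filter, Finset.mem_univ, true_and] at hw
  have hint : ∀ s ∈ Finset.univ.filter (fun s : Fin n → Bool => Fin.append δ s ∈ T),
      ∀ t ∈ Finset.univ.filter (fun s : Fin n → Bool => Fin.append δ s ∈ T),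
        ∃ j : Fin n, s j = t j := by
    intro s hs t ht
    simp only [Finset.mem_filter, Finset.mem_univ, true_and] at hs ht
    obtain ⟨j, hj1, hj2⟩ := hT _ hs _ ht _ hw
    rcases lt_or_ge (j : ℕ) k with h | h
    · -- j in first k coordinates: contradiction
      exfalso
      have hjk : (j : ℕ) < k := h
      have e1 : Fin.append δ s j = δ ⟨j, hjk⟩ := by
        simp [Fin.append, Fin.addCases, hjk]; rfl
      have e2 : Fin.append δ t j = δ ⟨j, hjk⟩ := by
        simp [Fin.append, Fin.addCases, hjk]; rfl
      have e3 : Fin.append (fun i => !(δ i)) w j = !(δ ⟨j, hjk⟩) := by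
        simp [Fin.append, Fin.addCases, hjk]; rfl
      rw [e1] at hj1
      rw [e3] at hj2
      rw [e2, hj1] at hj2
      simp at hj2
    · have hjk : k ≤ (j : ℕ) := h
      have hjn : (j : ℕ) - k < n := by omega
      refine ⟨⟨(j : ℕ) - k, hjn⟩, ?_⟩
      have hnl : ¬ (j : ℕ) < k := Nat.not_lt.mpr hjk
      have e1 : Fin.append δ s j = s ⟨(j : ℕ) - k, hjn⟩ := by
        simp [Fin.append, Fin.addCases, hnl, Fin.subNat, Fin.cast]
      have e2 : Fin.append δ t j = t ⟨(j : ℕ) - k, hjn⟩ := by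
        simp [Fin.append, Fin.addCases, hnl, Fin.subNat, Fin.cast]
      rw [e1, e2] at hj1
      exact hj1
  refine ⟨hint, ?_⟩
  set A := Finset.univ.filter (fun s : Fin n → Bool => Fin.append δ s ∈ T) with hA
  have hdisj : Disjoint A (A.image (fun s i => !(s i))) := by
    rw [Finset.disjoint_right]
    intro x hx hxA
    simp only [Finset.mem_image] at hx
    obtain ⟨y, hy, rfl⟩ := hx
    obtain ⟨j, hj⟩ := hint y hy _ hxA
    simp at hj
  have hinj : Set.InjOn (fun s : Fin n → Bool => fun i => !(s i)) A := by
    intro a _ b _ hab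
    funext i
    have := congrFun hab i
    simpa using this
  have hcard : A.card + A.card ≤ 2 ^ n := by
    calc A.card + A.card = (A ∪ A.image (fun s i => !(s i))).card := by
          rw [Finset.card_union_of_disjoint hdisj, Finset.card_image_of_injOn hinj]
      _ ≤ (Finset.univ : Finset (Fin n → Bool)).card := Finset.card_le_card (Finset.subset_univ _)
      _ = 2 ^ n := by simp
  have h2n : 2 ^ (n - 1) * 2 = 2 ^ n := by
    rw [← pow_succ]; congr 1; omega
  omega
end

section
/- A family T ⊆ {0,1}^m is a maximum 3-wise intersecting family (i.e., 3-wise intersecting of size 2^(m-1)) if and only if it equals {x ∈ {0,1}^m : x_j = u} for some coordinate j and bit u. -/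
open Finset

lemma star_card_aux (m : ℕ) (hm : 1 ≤ m) (j : Fin m) (u : Bool) :
    (Finset.univ.filter (fun x : Fin m → Bool => x j = u)).card = 2 ^ (m - 1) := by
  have key : (Finset.univ.filter (fun x : Fin m → Bool => x j = u)).card
      = (Finset.univ.filter (fun x : Fin m → Bool => ¬ (x j = u))).card := by
    apply Finset.card_bij (fun x _ => Function.update x j (!u))
    · intro a ha; simp
    · intro a ha b hb hab
      simp only [Finset.mem_filter, Finset.mem_univ, true_and] at ha hb
      funext l
      by_cases hl : l = j
      · subst hl; rw [ha, hb]
      · have := congrFun hab l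
        simpa [Function.update_of_ne hl] using this
    · intro b hb
      simp only [Finset.mem_filter, Finset.mem_univ, true_and] at hb
      have hbj : b j = !u := by cases hv : b j <;> cases u <;> simp_all
      refine ⟨Function.update b j u, by simp, ?_⟩
      funext l
      by_cases hl : l = j
      · subst hl; simp [hbj]
      · simp [Function.update_of_ne hl]
  have hsum : (Finset.univ.filter (fun x : Fin m → Bool => x j = u)).card
      + (Finset.univ.filter (fun x : Fin m → Bool => ¬ (x j = u))).card
      = 2 ^ m := by
    rw [Finset.card_filter_add_card_filter_not]
    simp [Finset.card_univ]
  have h2 : 2 ^ m = 2 * 2 ^ (m - 1) := by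
    rw [← pow_succ', Nat.sub_add_cancel hm]
  rw [h2] at hsum
  linarith [key, hsum]

theorem stmt_19 (m : ℕ) (hm : 1 ≤ m) (T : Finset (Fin m → Bool)) :
    ((∀ x ∈ T, ∀ y ∈ T, ∀ z ∈ T, ∃ j : Fin m, x j = y j ∧ y j = z j) ∧
      T.card = 2 ^ (m - 1)) ↔
    ∃ (j : Fin m) (u : Bool),
      T = Finset.univ.filter (fun x : Fin m → Bool => x j = u) := by
  constructor
  · rintro ⟨h3, hcard⟩
    -- the complement map
    set neg : (Fin m → Bool) → (Fin m → Bool) := fun x l => !(x l) with hnegdef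
    have hneginj : Function.Injective neg := by
      intro a b hab
      funext l
      have := congrFun hab l
      simp [hnegdef] at this
      exact this
    -- no complementary pair in T
    have hnopair : ∀ x ∈ T, neg x ∉ T := by
      intro x hx hnx
      obtain ⟨j, h1, _⟩ := h3 x hx (neg x) hnx (neg x) hnx
      simp [hnegdef] at h1
    -- completeness: exactly one of each pair
    have hcompl : ∀ w : Fin m → Bool, w ∉ T → neg w ∈ T := by
      intro w hw
      by_contra hnw
      set N := T.image neg with hN
      have hNcard : N.card = T.card := Finset.card_image_of_injective _ hneginj
      have hdisj : Disjoint T N := by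
        rw [Finset.disjoint_right]
        intro a haN haT
        rw [hN, Finset.mem_image] at haN
        obtain ⟨b, hb, rfl⟩ := haN
        exact hnopair b hb haT
      have hunion : (T ∪ N).card = 2 ^ m := by
        rw [Finset.card_union_of_disjoint hdisj, hNcard, hcard]
        have h2 : 2 ^ m = 2 * 2 ^ (m - 1) := by
          rw [← pow_succ', Nat.sub_add_cancel hm]
        omega
      have huniv : T ∪ N = Finset.univ := by
        apply Finset.eq_of_subset_of_card_le (Finset.subset_univ _)
        rw [hunion]
        simp [Finset.card_univ]
      have : w ∈ T ∪ N := huniv ▸ Finset.mem_univ w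
      rcases Finset.mem_union.mp this with h | h
      · exact hw h
      · rw [hN, Finset.mem_image] at h
        obtain ⟨b, hb, hbw⟩ := h
        have : neg w = b := by
          funext l
          have h := congrFun hbw l
          simp only [hnegdef] at h ⊢
          rw [← h]
          simp
        rw [this] at hnw
        exact hnw hb
    -- cube lemma
    have hcube : ∀ x ∈ T, ∀ y ∈ T, ∀ w : Fin m → Bool,
        (∀ j : Fin m, x j = y j → w j = x j) → w ∈ T := by
      intro x hx y hy w hw
      by_contra hwT
      have hnw := hcompl w hwT
      obtain ⟨j, h1, h2⟩ := h3 x hx y hy (neg w) hnw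
      have h3' := hw j h1
      simp only [hnegdef] at h2
      rw [h3', h1] at h2
      simp at h2
    -- T is nonempty
    have hTne : T.Nonempty := by
      rw [← Finset.card_pos, hcard]
      positivity
    -- minimal agreement set
    set S := (T ×ˢ T).image
      (fun p => (Finset.univ.filter (fun l => p.1 l = p.2 l)).card) with hS
    have hSne : S.Nonempty := by
      obtain ⟨a, ha⟩ := hTne
      exact ⟨_, Finset.mem_image.mpr ⟨(a, a), Finset.mem_product.mpr ⟨ha, ha⟩, rfl⟩⟩
    set k := S.min' hSne with hk
    obtain ⟨p, hp, hpk⟩ := Finset.mem_image.mp (S.min'_mem hSne)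
    obtain ⟨hx, hy⟩ := Finset.mem_product.mp hp
    set x := p.1
    set y := p.2
    set A := Finset.univ.filter (fun l => x l = y l) with hA
    have hAcard : A.card = k := hpk
    have hAne : A.Nonempty := by
      obtain ⟨j, h1, _⟩ := h3 x hx y hy y hy
      exact ⟨j, by simp [hA, h1]⟩
    obtain ⟨j, hjA⟩ := hAne
    have hjxy : x j = y j := by
      exact (Finset.mem_filter.mp hjA).2
    by_cases hstar : ∀ z ∈ T, z j = x j
    · refine ⟨j, x j, ?_⟩
      apply Finset.eq_of_subset_of_card_le
      · intro z hz
        simp [hstar z hz]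
      · rw [star_card_aux m hm j (x j), hcard]
    · push_neg at hstar
      obtain ⟨z, hz, hzj⟩ := hstar
      exfalso
      set w : Fin m → Bool := fun l => if x l = y l then x l else !(z l) with hw
      have hwT : w ∈ T := by
        apply hcube x hx y hy
        intro l hl
        simp [hw, hl]
      -- agreement set of z and w is contained in A.erase j
      set A' := Finset.univ.filter (fun l => z l = w l) with hA'
      have hA'sub : A' ⊆ A.erase j := by
        intro l hl
        simp only [hA', mem_filter, mem_univ, true_and] at hl
        by_cases hxy : x l = y l
        · have hwl : w l = x l := by simp [hw, hxy]
          rw [hwl] at hl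
          have hlj : l ≠ j := by
            rintro rfl
            exact hzj hl
          exact Finset.mem_erase.mpr ⟨hlj, by simp [hA, hxy]⟩
        · exfalso
          have hwl : w l = !(z l) := by simp [hw, hxy]
          rw [hwl] at hl
          simp at hl
      have hA'card : A'.card ≤ k - 1 := by
        calc A'.card ≤ (A.erase j).card := Finset.card_le_card hA'sub
        _ = A.card - 1 := Finset.card_erase_of_mem hjA
        _ = k - 1 := by rw [hAcard]
      have hkle : k ≤ A'.card := by
        apply Finset.min'_le
        exact Finset.mem_image.mpr ⟨(z, w), Finset.mem_product.mpr ⟨hz, hwT⟩, rfl⟩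
      have hk1 : 1 ≤ k := by
        rw [← hAcard]
        exact Finset.card_pos.mpr ⟨j, hjA⟩
      omega
  · rintro ⟨j, u, rfl⟩
    constructor
    · intro a ha b hb c hc
      simp only [mem_filter] at ha hb hc
      exact ⟨j, by rw [ha.2, hb.2], by rw [hb.2, hc.2]⟩
    · exact star_card_aux m hm j u
end
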